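/- Let G be a numerical semigroup with multiplicity e (smallest nonzero element) and Frobenius number f, and let ω₀ = 0 < ω₁ < ⋯ < ω_{e−1} be the elements of the Apéry set Ap(G, e) listed in increasing order. Then G is symmetric if and only if ωᵢ + ω_{e−1−i} = ω_{e−1} for all 0 ≤ i ≤ e − 1. -/

import Mathlib

/-!
Symmetry says exactly that every gap `n` of `G` has `f - n ∈ G`. If so, `x ↦ f + e - x` maps
`Ap(G, e)` into itself: `x - e ∉ G` forces `f + e - x ∈ G`, and `f + e - x - e ∈ G` would write `f`
as a sum of two elements of `G`. Conversely, if it does, a gap `n` lies below the Apéry element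
`n + (k + 1) e` of its residue class, and `(f + e - (n + (k + 1) e)) + k e = f - n` lies in `G`.
Since `ω` is increasing with largest value `f + e`, a pairing `ω i + ω j = f + e` is a strictly
decreasing self-map of `Fin e`, hence is `i ↦ e - 1 - i`.
-/

theorem Fin.eq_rev_of_strictAnti {n : ℕ} {ψ : Fin n → Fin n} (hψ : StrictAnti ψ) : ψ = Fin.rev :=
  funext fun i => by
    simpa using (hψ.comp Fin.rev_strictAnti).apply_eq (x := i.rev)

theorem StrictMono.forall_add_rev_eq_iff {α : Type*} [AddCommMonoid α] [LinearOrder α]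
    [IsOrderedCancelAddMonoid α] {n : ℕ} {ω : Fin n → α} (hω : StrictMono ω) (c : α) :
    (∀ i, ω i + ω i.rev = c) ↔ ∀ i, ∃ j, ω i + ω j = c := by
  refine ⟨fun h i => ⟨i.rev, h i⟩, fun h => ?_⟩
  choose ψ hψ using h
  have hanti : StrictAnti ψ := fun i i' hii' => lt_of_not_ge fun hle =>
    (add_lt_add_of_lt_of_le (hω hii') (hω.monotone hle)).ne ((hψ i).trans (hψ i').symm)
  intro i
  rw [← Fin.eq_rev_of_strictAnti hanti]
  exact hψ i

namespace NumericalSemigroup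

variable {G : Set ℕ} {e f : ℕ}

def IsSymmetric (G : Set ℕ) (f : ℕ) : Prop :=
  ∀ z : ℤ, (∃ x ∈ G, (x : ℤ) = z) ↔ ¬ ∃ x ∈ G, (x : ℤ) = (f : ℤ) - z

def IsApery (G : Set ℕ) (e x : ℕ) : Prop :=
  x ∈ G ∧ ¬ ∃ y ∈ G, y + e = x

theorem add_mul_mem (hadd : ∀ x ∈ G, ∀ y ∈ G, x + y ∈ G) (he : e ∈ G) {x : ℕ} (hx : x ∈ G)
    (k : ℕ) : x + k * e ∈ G := by
  induction k with
  | zero => simpa using hx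
  | succ k ih =>
    rw [Nat.succ_mul, ← add_assoc]
    exact hadd _ ih _ he

theorem isSymmetric_iff (hadd : ∀ x ∈ G, ∀ y ∈ G, x + y ∈ G) (hf : f ∉ G)
    (hfro : ∀ m : ℕ, f < m → m ∈ G) :
    IsSymmetric G f ↔ ∀ n ∉ G, ∃ m ∈ G, m + n = f := by
  refine ⟨fun h n hn => ?_, fun h z => ⟨?_, fun hne => ?_⟩⟩
  · have hnz : ¬ ∃ x ∈ G, (x : ℤ) = n := fun ⟨x, hx, hxn⟩ => hn (by rwa [← show x = n by omega])
    obtain ⟨m, hm, hmn⟩ := not_not.mp (mt (h n).mpr hnz)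
    exact ⟨m, hm, by omega⟩
  · rintro ⟨x, hx, rfl⟩ ⟨y, hy, hyx⟩
    exact hf (by rw [show f = y + x by omega]; exact hadd y hy x hx)
  · obtain hz | hz := lt_or_ge z 0
    · exact absurd ⟨(f - z).toNat, hfro _ (by omega), by omega⟩ hne
    · by_contra hzG
      obtain ⟨m, hm, hmz⟩ := h z.toNat fun hG => hzG ⟨_, hG, by omega⟩
      exact hne ⟨m, hm, by omega⟩

theorem IsApery.le_add (hfro : ∀ m : ℕ, f < m → m ∈ G) {x : ℕ} (hx : IsApery G e x) :
    x ≤ f + e := by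
  by_contra! h
  exact hx.2 ⟨x - e, hfro _ (by omega), by omega⟩

theorem isApery_add (hepos : 0 < e) (hf : f ∉ G) (hfro : ∀ m : ℕ, f < m → m ∈ G) :
    IsApery G e (f + e) :=
  ⟨hfro _ (by omega), fun ⟨y, hy, hye⟩ => hf (by rwa [show f = y by omega])⟩

theorem exists_isApery_add_mul {n : ℕ} (hn : n ∉ G) {m : ℕ} (hm : n + m * e ∈ G) :
    ∃ k, IsApery G e (n + (k + 1) * e) := by
  induction m with
  | zero => exact absurd (by simpa using hm) hn
  | succ m ih =>
    by_cases h : n + m * e ∈ G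
    · exact ih h
    · refine ⟨m, hm, fun ⟨y, hy, hye⟩ => h ?_⟩
      rw [Nat.succ_mul] at hye
      rwa [show n + m * e = y by omega]

theorem exists_isApery_add_eq_of_forall_notMem (hadd : ∀ x ∈ G, ∀ y ∈ G, x + y ∈ G)
    (hf : f ∉ G) (hfro : ∀ m : ℕ, f < m → m ∈ G) (hG : ∀ n ∉ G, ∃ m ∈ G, m + n = f) {x : ℕ}
    (hx : IsApery G e x) : ∃ y, IsApery G e y ∧ x + y = f + e := by
  have hxle := hx.le_add hfro
  refine ⟨f + e - x, ⟨?_, ?_⟩, by omega⟩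
  · by_contra hy
    obtain ⟨m, hm, hmy⟩ := hG _ hy
    exact hx.2 ⟨m, hm, by omega⟩
  · rintro ⟨t, ht, hte⟩
    exact hf (by rw [show f = t + x by omega]; exact hadd t ht x hx.1)

theorem forall_notMem_of_exists_isApery_add_eq (hadd : ∀ x ∈ G, ∀ y ∈ G, x + y ∈ G)
    (hfro : ∀ m : ℕ, f < m → m ∈ G) (hepos : 0 < e) (he : e ∈ G)
    (h : ∀ x, IsApery G e x → ∃ y, IsApery G e y ∧ x + y = f + e) :
    ∀ n ∉ G, ∃ m ∈ G, m + n = f := by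
  intro n hn
  have hbig : f < n + (f + 1) * e := by nlinarith
  obtain ⟨k, hk⟩ := exists_isApery_add_mul hn (hfro _ hbig)
  obtain ⟨y, hy, hxy⟩ := h _ hk
  rw [Nat.succ_mul] at hxy
  exact ⟨y + k * e, add_mul_mem hadd he hy.1 k, by omega⟩

theorem isSymmetric_iff_forall_exists_isApery_add_eq (hadd : ∀ x ∈ G, ∀ y ∈ G, x + y ∈ G)
    (hf : f ∉ G) (hfro : ∀ m : ℕ, f < m → m ∈ G) (hepos : 0 < e) (he : e ∈ G) :
    IsSymmetric G f ↔ ∀ x, IsApery G e x → ∃ y, IsApery G e y ∧ x + y = f + e := by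
  rw [isSymmetric_iff hadd hf hfro]
  exact ⟨fun hG _ => exists_isApery_add_eq_of_forall_notMem hadd hf hfro hG,
    forall_notMem_of_exists_isApery_add_eq hadd hfro hepos he⟩

end NumericalSemigroup

open NumericalSemigroup in
theorem stmt_3 (G : Set ℕ)
    (hadd : ∀ x ∈ G, ∀ y ∈ G, x + y ∈ G)
    (f : ℕ) (hf : f ∉ G) (hfro : ∀ m : ℕ, f < m → m ∈ G)
    (e : ℕ) (hepos : 0 < e) (he : IsLeast {x | x ∈ G ∧ 0 < x} e)
    (ω : Fin e → ℕ) (hω : StrictMono ω)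
    (hrange : ∀ x : ℕ, (x ∈ G ∧ ¬ ∃ y ∈ G, y + e = x) ↔ ∃ i : Fin e, ω i = x) :
    (∀ z : ℤ, (∃ x ∈ G, (x : ℤ) = z) ↔ ¬ ∃ x ∈ G, (x : ℤ) = (f : ℤ) - z) ↔
      (∀ i : Fin e, ω i + ω ⟨e - 1 - i.val, by omega⟩ = ω ⟨e - 1, by omega⟩) := by
  have hapery : ∀ x, IsApery G e x ↔ ∃ i, ω i = x := hrange
  have htop : ω ⟨e - 1, by omega⟩ = f + e := by
    obtain ⟨j, hj⟩ := (hapery _).1 (isApery_add hepos hf hfro)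
    have hle : ω j ≤ ω ⟨e - 1, by omega⟩ := hω.monotone (Fin.mk_le_mk.mpr (by omega))
    have hge := ((hapery _).2 ⟨⟨e - 1, by omega⟩, rfl⟩).le_add hfro
    omega
  have hrev : ∀ i : Fin e, (⟨e - 1 - i.val, by omega⟩ : Fin e) = i.rev :=
    fun i => Fin.ext (by simp only [Fin.val_rev]; omega)
  simp only [hrev, htop]
  change IsSymmetric G f ↔ _
  rw [isSymmetric_iff_forall_exists_isApery_add_eq hadd hf hfro hepos he.1.1,
    hω.forall_add_rev_eq_iff]
  simp only [hapery, forall_exists_index, forall_apply_eq_imp_iff, exists_exists_eq_and]
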